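/- arXiv:1810.05740 — 8 statements merged into one kernel-verified Lean document; each statement's English description precedes it below -/
import Mathlib

section
/- Let W and V be vector spaces over ℝ and φ : W → V a linear map. Let S be the set of linear maps A : V → W such that both id_W + A∘φ and id_V + φ∘A are bijective. Then: (a) 0 ∈ S; (b) if A₁, A₂ ∈ S then A₁ ⊙ A₂ := A₁ + A₂ + A₁∘φ∘A₂ ∈ S; (c) ⊙ is associative on S; (d) A ⊙ 0 = 0 ⊙ A = A for all A ∈ S; (e) for A ∈ S, the map A† := −A∘(id_V + φ∘A)⁻¹ equals −(id_W + A∘φ)⁻¹∘A, lies in S, and satisfies A ⊙ A† = A† ⊙ A = 0. -/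
/-- The set `GL(φ)₁` of linear maps `A : V → W` such that `1 + A∘φ` and `1 + φ∘A` are
bijective. -/
def GLone {W V : Type*} [AddCommGroup W] [Module ℝ W] [AddCommGroup V] [Module ℝ V]
    (φ : W →ₗ[ℝ] V) : Set (V →ₗ[ℝ] W) :=
  {A | Function.Bijective ⇑((LinearMap.id : W →ₗ[ℝ] W) + A ∘ₗ φ) ∧
       Function.Bijective ⇑((LinearMap.id : V →ₗ[ℝ] V) + φ ∘ₗ A)}

/-- The operation `A₁ ⊙ A₂ := A₁ + A₂ + A₁∘φ∘A₂`. -/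
def odotL {W V : Type*} [AddCommGroup W] [Module ℝ W] [AddCommGroup V] [Module ℝ V]
    (φ : W →ₗ[ℝ] V) (A₁ A₂ : V →ₗ[ℝ] W) : V →ₗ[ℝ] W :=
  A₁ + A₂ + A₁ ∘ₗ φ ∘ₗ A₂

/-- The candidate inverse `A† := -A ∘ (1 + φ∘A)⁻¹`. -/
noncomputable def daggerL {W V : Type*} [AddCommGroup W] [Module ℝ W] [AddCommGroup V]
    [Module ℝ V] (φ : W →ₗ[ℝ] V) (A : V →ₗ[ℝ] W)
    (h₂ : Function.Bijective ⇑((LinearMap.id : V →ₗ[ℝ] V) + φ ∘ₗ A)) : V →ₗ[ℝ] W :=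
  -(A ∘ₗ (LinearEquiv.ofBijective ((LinearMap.id : V →ₗ[ℝ] V) + φ ∘ₗ A) h₂).symm.toLinearMap)

/-! Under `A ↦ (1 + A∘φ, 1 + φ∘A)` the operation `⊙` becomes composition of endomorphisms,
which gives closure. The push-through identity `A∘(1 + φ∘A) = (1 + A∘φ)∘A` gives the two
expressions for `A†`, and with them `1 + φ∘A† = (1 + φ∘A)⁻¹` and `1 + A†∘φ = (1 + A∘φ)⁻¹`. -/

theorem LinearEquiv.toLinearMap_ofBijective {R M N : Type*} [Semiring R] [AddCommMonoid M]
    [Module R M] [AddCommMonoid N] [Module R N] (f : M →ₗ[R] N) (hf : Function.Bijective f) :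
    (LinearEquiv.ofBijective f hf : M →ₗ[R] N) = f :=
  LinearMap.ext fun _ => rfl

section PushThrough

variable {R M N : Type*} [Ring R] [AddCommGroup M] [Module R M] [AddCommGroup N] [Module R N]
  (φ : M →ₗ[R] N) (A : N →ₗ[R] M)

theorem comp_id_add_comp_comm :
    A ∘ₗ (LinearMap.id + φ ∘ₗ A) = (LinearMap.id + A ∘ₗ φ) ∘ₗ A := by
  simp only [LinearMap.comp_add, LinearMap.add_comp, LinearMap.comp_id, LinearMap.id_comp,
    LinearMap.comp_assoc]

variable {φ A}

theorem symm_comp_eq_comp_symm {e₁ : M ≃ₗ[R] M} {e₂ : N ≃ₗ[R] N}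
    (he₁ : (e₁ : M →ₗ[R] M) = LinearMap.id + A ∘ₗ φ)
    (he₂ : (e₂ : N →ₗ[R] N) = LinearMap.id + φ ∘ₗ A) :
    e₁.symm.toLinearMap ∘ₗ A = A ∘ₗ e₂.symm.toLinearMap := by
  rw [LinearEquiv.toLinearMap_symm_comp_eq, ← LinearMap.comp_assoc, he₁,
    ← comp_id_add_comp_comm, ← he₂, LinearEquiv.comp_symm_cancel_right]

theorem id_add_comp_neg_comp_symm {e : N ≃ₗ[R] N}
    (he : (e : N →ₗ[R] N) = LinearMap.id + φ ∘ₗ A) :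
    LinearMap.id + φ ∘ₗ (-(A ∘ₗ e.symm.toLinearMap)) = e.symm.toLinearMap := by
  have h := e.comp_symm
  rw [he, LinearMap.add_comp, LinearMap.id_comp] at h
  rw [← h, LinearMap.comp_neg, LinearMap.comp_assoc]
  abel

theorem id_add_neg_symm_comp_comp {e : M ≃ₗ[R] M}
    (he : (e : M →ₗ[R] M) = LinearMap.id + A ∘ₗ φ) :
    LinearMap.id + (-(e.symm.toLinearMap ∘ₗ A)) ∘ₗ φ = e.symm.toLinearMap := by
  have h := e.symm_comp
  rw [he, LinearMap.comp_add, LinearMap.comp_id] at h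
  rw [← h, LinearMap.neg_comp, LinearMap.comp_assoc]
  abel

end PushThrough

section GLone

variable {W V : Type*} [AddCommGroup W] [Module ℝ W] [AddCommGroup V] [Module ℝ V]
  (φ : W →ₗ[ℝ] V)

theorem odotL_assoc (A₁ A₂ A₃ : V →ₗ[ℝ] W) :
    odotL φ (odotL φ A₁ A₂) A₃ = odotL φ A₁ (odotL φ A₂ A₃) := by
  simp only [odotL, LinearMap.add_comp, LinearMap.comp_add, LinearMap.comp_assoc]
  abel

theorem odotL_zero (A : V →ₗ[ℝ] W) : odotL φ A 0 = A := by
  simp [odotL]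

theorem zero_odotL (A : V →ₗ[ℝ] W) : odotL φ 0 A = A := by
  simp [odotL]

theorem odotL_eq_add_id_add_comp_comp (A₁ A₂ : V →ₗ[ℝ] W) :
    odotL φ A₁ A₂ = A₁ + (LinearMap.id + A₁ ∘ₗ φ) ∘ₗ A₂ := by
  rw [odotL, LinearMap.add_comp, LinearMap.id_comp, LinearMap.comp_assoc, add_assoc]

theorem odotL_eq_add_comp_id_add_comp (A₁ A₂ : V →ₗ[ℝ] W) :
    odotL φ A₁ A₂ = A₂ + A₁ ∘ₗ (LinearMap.id + φ ∘ₗ A₂) := by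
  rw [odotL, LinearMap.comp_add, LinearMap.comp_id]
  abel

theorem id_add_odotL_comp (A₁ A₂ : V →ₗ[ℝ] W) :
    LinearMap.id + odotL φ A₁ A₂ ∘ₗ φ =
      (LinearMap.id + A₁ ∘ₗ φ) ∘ₗ (LinearMap.id + A₂ ∘ₗ φ) := by
  simp only [odotL, LinearMap.add_comp, LinearMap.comp_add, LinearMap.id_comp,
    LinearMap.comp_id, LinearMap.comp_assoc]
  abel

theorem id_add_comp_odotL (A₁ A₂ : V →ₗ[ℝ] W) :
    LinearMap.id + φ ∘ₗ odotL φ A₁ A₂ =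
      (LinearMap.id + φ ∘ₗ A₁) ∘ₗ (LinearMap.id + φ ∘ₗ A₂) := by
  simp only [odotL, LinearMap.add_comp, LinearMap.comp_add, LinearMap.id_comp,
    LinearMap.comp_id, LinearMap.comp_assoc]
  abel

theorem zero_mem_GLone : (0 : V →ₗ[ℝ] W) ∈ GLone φ := by
  simp only [GLone, Set.mem_ofPred_eq, LinearMap.zero_comp, LinearMap.comp_zero, add_zero,
    LinearMap.id_coe]
  exact ⟨Function.bijective_id, Function.bijective_id⟩

theorem odotL_mem_GLone {A₁ A₂ : V →ₗ[ℝ] W} (h₁ : A₁ ∈ GLone φ) (h₂ : A₂ ∈ GLone φ) :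
    odotL φ A₁ A₂ ∈ GLone φ := by
  rw [GLone, Set.mem_ofPred_eq, id_add_odotL_comp, id_add_comp_odotL, LinearMap.coe_comp,
    LinearMap.coe_comp]
  exact ⟨h₁.1.comp h₂.1, h₁.2.comp h₂.2⟩

variable {φ} {A : V →ₗ[ℝ] W}

theorem daggerL_eq_neg_symm_comp
    (h₁ : Function.Bijective ⇑((LinearMap.id : W →ₗ[ℝ] W) + A ∘ₗ φ))
    (h₂ : Function.Bijective ⇑((LinearMap.id : V →ₗ[ℝ] V) + φ ∘ₗ A)) :
    daggerL φ A h₂ = -((LinearEquiv.ofBijective _ h₁).symm.toLinearMap ∘ₗ A) := by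
  rw [daggerL, symm_comp_eq_comp_symm (LinearEquiv.toLinearMap_ofBijective _ h₁)
    (LinearEquiv.toLinearMap_ofBijective _ h₂)]

theorem id_add_comp_daggerL (h₂ : Function.Bijective ⇑((LinearMap.id : V →ₗ[ℝ] V) + φ ∘ₗ A)) :
    LinearMap.id + φ ∘ₗ daggerL φ A h₂ = (LinearEquiv.ofBijective _ h₂).symm.toLinearMap :=
  id_add_comp_neg_comp_symm (LinearEquiv.toLinearMap_ofBijective _ h₂)

theorem id_add_daggerL_comp
    (h₁ : Function.Bijective ⇑((LinearMap.id : W →ₗ[ℝ] W) + A ∘ₗ φ))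
    (h₂ : Function.Bijective ⇑((LinearMap.id : V →ₗ[ℝ] V) + φ ∘ₗ A)) :
    LinearMap.id + daggerL φ A h₂ ∘ₗ φ = (LinearEquiv.ofBijective _ h₁).symm.toLinearMap := by
  rw [daggerL_eq_neg_symm_comp h₁, id_add_neg_symm_comp_comp
    (LinearEquiv.toLinearMap_ofBijective _ h₁)]

theorem daggerL_mem_GLone
    (h₁ : Function.Bijective ⇑((LinearMap.id : W →ₗ[ℝ] W) + A ∘ₗ φ))
    (h₂ : Function.Bijective ⇑((LinearMap.id : V →ₗ[ℝ] V) + φ ∘ₗ A)) :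
    daggerL φ A h₂ ∈ GLone φ := by
  rw [GLone, Set.mem_ofPred_eq, id_add_daggerL_comp h₁, id_add_comp_daggerL]
  exact ⟨LinearEquiv.bijective _, LinearEquiv.bijective _⟩

theorem odotL_daggerL
    (h₁ : Function.Bijective ⇑((LinearMap.id : W →ₗ[ℝ] W) + A ∘ₗ φ))
    (h₂ : Function.Bijective ⇑((LinearMap.id : V →ₗ[ℝ] V) + φ ∘ₗ A)) :
    odotL φ A (daggerL φ A h₂) = 0 := by
  have cancel := (LinearEquiv.ofBijective _ h₁).comp_symm_cancel_left A
  rw [LinearEquiv.toLinearMap_ofBijective] at cancel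
  rw [odotL_eq_add_id_add_comp_comp, daggerL_eq_neg_symm_comp h₁, LinearMap.comp_neg, cancel,
    add_neg_cancel]

theorem daggerL_odotL (h₂ : Function.Bijective ⇑((LinearMap.id : V →ₗ[ℝ] V) + φ ∘ₗ A)) :
    odotL φ (daggerL φ A h₂) A = 0 := by
  have cancel := (LinearEquiv.ofBijective _ h₂).symm_comp
  rw [LinearEquiv.toLinearMap_ofBijective] at cancel
  rw [odotL_eq_add_comp_id_add_comp, daggerL, LinearMap.neg_comp, LinearMap.comp_assoc, cancel,
    LinearMap.comp_id, add_neg_cancel]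

end GLone

/-- `GL(φ)₁` with the operation `⊙` is a group: it contains `0`, is closed
under `⊙`, the operation is associative with identity `0`, and `A†` is a two-sided inverse
equal to `-(1 + A∘φ)⁻¹ ∘ A`. -/
theorem stmt2 {W V : Type*} [AddCommGroup W] [Module ℝ W] [AddCommGroup V] [Module ℝ V]
    (φ : W →ₗ[ℝ] V) :
    -- (a)
    ((0 : V →ₗ[ℝ] W) ∈ GLone φ) ∧
    -- (b)
    (∀ A₁ A₂ : V →ₗ[ℝ] W, A₁ ∈ GLone φ → A₂ ∈ GLone φ → odotL φ A₁ A₂ ∈ GLone φ) ∧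
    -- (c)
    (∀ A₁ A₂ A₃ : V →ₗ[ℝ] W, A₁ ∈ GLone φ → A₂ ∈ GLone φ → A₃ ∈ GLone φ →
      odotL φ (odotL φ A₁ A₂) A₃ = odotL φ A₁ (odotL φ A₂ A₃)) ∧
    -- (d)
    (∀ A ∈ GLone φ, odotL φ A 0 = A ∧ odotL φ 0 A = A) ∧
    -- (e)
    (∀ (A : V →ₗ[ℝ] W) (h₁ : Function.Bijective ⇑((LinearMap.id : W →ₗ[ℝ] W) + A ∘ₗ φ))
        (h₂ : Function.Bijective ⇑((LinearMap.id : V →ₗ[ℝ] V) + φ ∘ₗ A)),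
      daggerL φ A h₂ =
        -((LinearEquiv.ofBijective ((LinearMap.id : W →ₗ[ℝ] W) + A ∘ₗ φ) h₁).symm.toLinearMap
          ∘ₗ A) ∧
      daggerL φ A h₂ ∈ GLone φ ∧
      odotL φ A (daggerL φ A h₂) = 0 ∧ odotL φ (daggerL φ A h₂) A = 0) := by
  exact ⟨zero_mem_GLone φ, fun _ _ => odotL_mem_GLone φ,
    fun A₁ A₂ A₃ _ _ _ => odotL_assoc φ A₁ A₂ A₃, fun A _ => ⟨odotL_zero φ A, zero_odotL φ A⟩,
    fun A h₁ h₂ => ⟨daggerL_eq_neg_symm_comp h₁ h₂, daggerL_mem_GLone h₁ h₂,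
      odotL_daggerL h₁ h₂, daggerL_odotL h₂⟩⟩
end

section
/- Let (i : G → H) be a crossed module of groups and let (ρ₀¹, ρ₀⁰, ρ₁) be a 2-representation of it on a linear map φ : W → V of real vector spaces. Equip G × H with the group structure (g₀,h₀)·(g₁,h₁) := (g₀^{h₁}·g₁, h₀h₁). For (g,h) ∈ G × H define the linear map ρ̄(g,h) : W × V → W × V by ρ̄(g,h)(w,v) := (ρ₀¹(h·i(g))(w) + ρ₀¹(h)(ρ₁(g)(v)), ρ₀⁰(h)(v)). Then each ρ̄(g,h) is a linear automorphism of W × V and ρ̄ is a group homomorphism: ρ̄((g₀,h₀)·(g₁,h₁)) = ρ̄(g₀,h₀) ∘ ρ̄(g₁,h₁) for all g₀,g₁ ∈ G and h₀,h₁ ∈ H. -/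
/-!
Writing `D h = ρ₀¹(h) × ρ₀⁰(h)` and `U g (w, v) = (ρ₀¹(i g) w + ρ₁(g) v, v)`, one has
`ρ̄(g, h) = D h ∘ U g`, mirroring `(g, h) = (1, h)·(g, 1)` in `G × H`. The map `D` is
multiplicative because `ρ₀¹, ρ₀⁰` are, `U` is multiplicative by the cocycle identity for `ρ₁`
together with `ρ₀¹(i g) = id + ρ₁(g) φ`, and equivariance of `i` and `ρ₁` gives
`D h ∘ U (g^h) = U g ∘ D h`. Hence
`ρ̄(g₀^{h₁} g₁, h₀h₁) = D h₀ D h₁ U(g₀^{h₁}) U g₁ = D h₀ U g₀ D h₁ U g₁`.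
-/

def rhoBar {G H W V : Type*} [Group G] [Group H] [AddCommGroup W] [Module ℝ W]
    [AddCommGroup V] [Module ℝ V] (i : G →* H)
    (ρW : H → W ≃ₗ[ℝ] W) (ρV : H → V ≃ₗ[ℝ] V) (ρ₁ : G → V →ₗ[ℝ] W)
    (g : G) (h : H) : W × V → W × V :=
  fun p => (ρW (h * i g) p.1 + ρW h (ρ₁ g p.2), ρV h p.2)

section RhoBar

variable {G H W V : Type*} [Group G] [Group H] [AddCommGroup W] [Module ℝ W]
  [AddCommGroup V] [Module ℝ V] (i : G →* H) (ρW : H → W ≃ₗ[ℝ] W) (ρV : H → V ≃ₗ[ℝ] V)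
  (ρ₁ : G → V →ₗ[ℝ] W)

/-- `skewProd` is block lower triangular; conjugating by the swap makes it upper triangular. -/
def rhoBarEquiv (g : G) (h : H) : (W × V) ≃ₗ[ℝ] W × V :=
  (LinearEquiv.prodComm ℝ W V).trans <|
    ((ρV h).skewProd (ρW (h * i g)) ((ρW h).toLinearMap ∘ₗ ρ₁ g)).trans
      (LinearEquiv.prodComm ℝ V W)

theorem coe_rhoBarEquiv (g : G) (h : H) :
    ⇑(rhoBarEquiv i ρW ρV ρ₁ g h) = rhoBar i ρW ρV ρ₁ g h :=
  rfl

theorem isLinearMap_rhoBar (g : G) (h : H) : IsLinearMap ℝ (rhoBar i ρW ρV ρ₁ g h) :=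
  coe_rhoBarEquiv i ρW ρV ρ₁ g h ▸ (rhoBarEquiv i ρW ρV ρ₁ g h).toLinearMap.isLinear

theorem bijective_rhoBar (g : G) (h : H) : Function.Bijective (rhoBar i ρW ρV ρ₁ g h) :=
  coe_rhoBarEquiv i ρW ρV ρ₁ g h ▸ (rhoBarEquiv i ρW ρV ρ₁ g h).bijective

def rhoBarUnipotent (g : G) (p : W × V) : W × V :=
  (ρW (i g) p.1 + ρ₁ g p.2, p.2)

variable {i ρW ρV ρ₁}

theorem prodMap_mul (hρW_mul : ∀ (h₀ h₁ : H) (w : W), ρW (h₀ * h₁) w = ρW h₀ (ρW h₁ w))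
    (hρV_mul : ∀ (h₀ h₁ : H) (v : V), ρV (h₀ * h₁) v = ρV h₀ (ρV h₁ v)) (h₀ h₁ : H) :
    Prod.map (ρW (h₀ * h₁)) (ρV (h₀ * h₁)) =
      Prod.map (ρW h₀) (ρV h₀) ∘ Prod.map (ρW h₁) (ρV h₁) := by
  rw [Prod.map_comp_map]
  exact congrArg₂ Prod.map (funext (hρW_mul h₀ h₁)) (funext (hρV_mul h₀ h₁))

theorem rhoBar_eq_prodMap_comp
    (hρW_mul : ∀ (h₀ h₁ : H) (w : W), ρW (h₀ * h₁) w = ρW h₀ (ρW h₁ w))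
    (g : G) (h : H) :
    rhoBar i ρW ρV ρ₁ g h = Prod.map (ρW h) (ρV h) ∘ rhoBarUnipotent i ρW ρ₁ g := by
  funext p
  simp only [rhoBar, rhoBarUnipotent, Function.comp_apply, Prod.map, hρW_mul, map_add]

theorem rhoBarUnipotent_mul {φ : W →ₗ[ℝ] V}
    (hρW_mul : ∀ (h₀ h₁ : H) (w : W), ρW (h₀ * h₁) w = ρW h₀ (ρW h₁ w))
    (hρ₁_mul : ∀ (g₀ g₁ : G) (v : V),
      ρ₁ (g₀ * g₁) v = ρ₁ g₀ v + ρ₁ g₁ v + ρ₁ g₀ (φ (ρ₁ g₁ v)))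
    (hρW_i : ∀ (g : G) (w : W), ρW (i g) w = w + ρ₁ g (φ w)) (g₀ g₁ : G) :
    rhoBarUnipotent i ρW ρ₁ (g₀ * g₁) =
      rhoBarUnipotent i ρW ρ₁ g₀ ∘ rhoBarUnipotent i ρW ρ₁ g₁ := by
  funext p
  have hcross : ρW (i g₀) (ρ₁ g₁ p.2) = ρ₁ g₁ p.2 + ρ₁ g₀ (φ (ρ₁ g₁ p.2)) := hρW_i _ _
  simp only [rhoBarUnipotent, Function.comp_apply, map_mul, hρW_mul, hρ₁_mul, map_add, hcross]
  exact Prod.ext (by dsimp only; abel) rfl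

theorem prodMap_comp_rhoBarUnipotent_act {act : G → H → G}
    (hequiv : ∀ (g : G) (h : H), i (act g h) = h⁻¹ * i g * h)
    (hρW_mul : ∀ (h₀ h₁ : H) (w : W), ρW (h₀ * h₁) w = ρW h₀ (ρW h₁ w))
    (hρ₁_act : ∀ (g : G) (h : H) (v : V), ρ₁ (act g h) v = (ρW h).symm (ρ₁ g (ρV h v)))
    (g : G) (h : H) :
    Prod.map (ρW h) (ρV h) ∘ rhoBarUnipotent i ρW ρ₁ (act g h) =
      rhoBarUnipotent i ρW ρ₁ g ∘ Prod.map (ρW h) (ρV h) := by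
  have hconj : h * i (act g h) = i g * h := by rw [hequiv]; group
  funext p
  have hw : ρW h (ρW (i (act g h)) p.1) = ρW (i g) (ρW h p.1) := by
    rw [← hρW_mul, hconj, hρW_mul]
  simp only [rhoBarUnipotent, Function.comp_apply, Prod.map, map_add, hw, hρ₁_act,
    LinearEquiv.apply_symm_apply]

end RhoBar

theorem stmt7_general {G : Type*} {H : Type*} [Group G] [Group H] (i : G →* H) (act : G → H → G)
    (hequiv : ∀ (g : G) (h : H), i (act g h) = h⁻¹ * i g * h)
    {W : Type*} {V : Type*} [AddCommGroup W] [Module ℝ W] [AddCommGroup V] [Module ℝ V]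
    (φ : W →ₗ[ℝ] V) (ρW : H → W ≃ₗ[ℝ] W) (ρV : H → V ≃ₗ[ℝ] V) (ρ₁ : G → V →ₗ[ℝ] W)
    (hρW_mul : ∀ (h₀ h₁ : H) (w : W), ρW (h₀ * h₁) w = ρW h₀ (ρW h₁ w))
    (hρV_mul : ∀ (h₀ h₁ : H) (v : V), ρV (h₀ * h₁) v = ρV h₀ (ρV h₁ v))
    (hρ₁_mul : ∀ (g₀ g₁ : G) (v : V),
      ρ₁ (g₀ * g₁) v = ρ₁ g₀ v + ρ₁ g₁ v + ρ₁ g₀ (φ (ρ₁ g₁ v)))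
    (hρW_i : ∀ (g : G) (w : W), ρW (i g) w = w + ρ₁ g (φ w))
    (hρ₁_act : ∀ (g : G) (h : H) (v : V), ρ₁ (act g h) v = (ρW h).symm (ρ₁ g (ρV h v))) :
    -- each ρ̄(g,h) is a linear automorphism of W × V
    (∀ (g : G) (h : H),
      IsLinearMap ℝ (rhoBar i ρW ρV ρ₁ g h) ∧ Function.Bijective (rhoBar i ρW ρV ρ₁ g h)) ∧
    -- ρ̄ is a group homomorphism
    (∀ (g₀ g₁ : G) (h₀ h₁ : H),
      rhoBar i ρW ρV ρ₁ (act g₀ h₁ * g₁) (h₀ * h₁) =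
        rhoBar i ρW ρV ρ₁ g₀ h₀ ∘ rhoBar i ρW ρV ρ₁ g₁ h₁) := by
  refine ⟨fun g h => ⟨isLinearMap_rhoBar i ρW ρV ρ₁ g h, bijective_rhoBar i ρW ρV ρ₁ g h⟩,
    fun g₀ g₁ h₀ h₁ => ?_⟩
  let D h := Prod.map (ρW h) (ρV h)
  let U := rhoBarUnipotent i ρW ρ₁
  have hfactor : ∀ g h, rhoBar i ρW ρV ρ₁ g h = D h ∘ U g :=
    rhoBar_eq_prodMap_comp hρW_mul
  have hD : D (h₀ * h₁) = D h₀ ∘ D h₁ := prodMap_mul hρW_mul hρV_mul h₀ h₁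
  have hU : U (act g₀ h₁ * g₁) = U (act g₀ h₁) ∘ U g₁ :=
    rhoBarUnipotent_mul hρW_mul hρ₁_mul hρW_i _ _
  have hconj : D h₁ ∘ U (act g₀ h₁) = U g₀ ∘ D h₁ :=
    prodMap_comp_rhoBarUnipotent_act hequiv hρW_mul hρ₁_act g₀ h₁
  calc rhoBar i ρW ρV ρ₁ (act g₀ h₁ * g₁) (h₀ * h₁)
      = D h₀ ∘ (D h₁ ∘ U (act g₀ h₁)) ∘ U g₁ := by rw [hfactor, hD, hU]; rfl
    _ = D h₀ ∘ (U g₀ ∘ D h₁) ∘ U g₁ := by rw [hconj]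
    _ = rhoBar i ρW ρV ρ₁ g₀ h₀ ∘ rhoBar i ρW ρV ρ₁ g₁ h₁ := by rw [hfactor, hfactor]; rfl

/-- given a 2-representation of a crossed module, each `ρ̄(g,h)` is a linear
automorphism of `W × V` and `ρ̄` is a group homomorphism for the semidirect product
`(g₀,h₀)·(g₁,h₁) = (g₀^{h₁}·g₁, h₀h₁)`. -/
theorem stmt7 {G : Type*} {H : Type*} [Group G] [Group H] (i : G →* H) (act : G → H → G)
    (hact_one : ∀ g : G, act g 1 = g)
    (hact_mul : ∀ (g : G) (h₀ h₁ : H), act (act g h₀) h₁ = act g (h₀ * h₁))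
    (hact_gmul : ∀ (g₀ g₁ : G) (h : H), act (g₀ * g₁) h = act g₀ h * act g₁ h)
    (hequiv : ∀ (g : G) (h : H), i (act g h) = h⁻¹ * i g * h)
    (hpeiffer : ∀ g₁ g₂ : G, act g₁ (i g₂) = g₂⁻¹ * g₁ * g₂)
    {W : Type*} {V : Type*} [AddCommGroup W] [Module ℝ W] [AddCommGroup V] [Module ℝ V]
    (φ : W →ₗ[ℝ] V) (ρW : H → W ≃ₗ[ℝ] W) (ρV : H → V ≃ₗ[ℝ] V) (ρ₁ : G → V →ₗ[ℝ] W)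
    (hρW_mul : ∀ (h₀ h₁ : H) (w : W), ρW (h₀ * h₁) w = ρW h₀ (ρW h₁ w))
    (hρV_mul : ∀ (h₀ h₁ : H) (v : V), ρV (h₀ * h₁) v = ρV h₀ (ρV h₁ v))
    (hφρ : ∀ (h : H) (w : W), φ (ρW h w) = ρV h (φ w))
    (hρ₁_mul : ∀ (g₀ g₁ : G) (v : V),
      ρ₁ (g₀ * g₁) v = ρ₁ g₀ v + ρ₁ g₁ v + ρ₁ g₀ (φ (ρ₁ g₁ v)))
    (hρV_i : ∀ (g : G) (v : V), ρV (i g) v = v + φ (ρ₁ g v))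
    (hρW_i : ∀ (g : G) (w : W), ρW (i g) w = w + ρ₁ g (φ w))
    (hρ₁_act : ∀ (g : G) (h : H) (v : V), ρ₁ (act g h) v = (ρW h).symm (ρ₁ g (ρV h v))) :
    -- each ρ̄(g,h) is a linear automorphism of W × V
    (∀ (g : G) (h : H),
      IsLinearMap ℝ (rhoBar i ρW ρV ρ₁ g h) ∧ Function.Bijective (rhoBar i ρW ρV ρ₁ g h)) ∧
    -- ρ̄ is a group homomorphism
    (∀ (g₀ g₁ : G) (h₀ h₁ : H),
      rhoBar i ρW ρV ρ₁ (act g₀ h₁ * g₁) (h₀ * h₁) =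
        rhoBar i ρW ρV ρ₁ g₀ h₀ ∘ rhoBar i ρW ρV ρ₁ g₁ h₁) :=
  stmt7_general i act hequiv φ ρW ρV ρ₁ hρW_mul hρV_mul hρ₁_mul hρW_i hρ₁_act
end

section
/- Let (i : G → H) be a crossed module of groups. Then for any q ≥ 1 and any elements g₁,…,g_q, g'₁,…,g'_q ∈ G and h₁,…,h_q ∈ H, the following identity holds: the ordered product over k = 1,…,q of (g_k·g'_k)^{h_{k+1}h_{k+2}⋯h_q} equals the ordered product over k = 1,…,q of g_k^{h_{k+1}⋯h_q} multiplied by the ordered product over k = 1,…,q of (g'_k)^{h_{k+1}·i(g_{k+1})·h_{k+2}·i(g_{k+2})⋯h_q·i(g_q)} (all empty exponent products being the identity of H). -/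
/-!
Write `twistedProd g h = ∏ₖ g_k^{h_{k+1}⋯h_q}`. Equivariance gives
`∏ₖ h_k i(g_k) = (∏ₖ h_k) · i(twistedProd g h)`, so the exponents on the right-hand side are
`h_{k+1}⋯h_q · i(twistedProd g_{>k} h_{>k})`. Peeling off the first factor, the Peiffer identity
lets `g'_1^{h_2⋯h_q}` move past `twistedProd g_{>1} h_{>1}` at the price of exactly this extra
`i(…)` in its exponent, and induction on `q` finishes the proof.
-/

theorem List.prod_ofFn_drop_succ {M α : Type*} [Monoid M] {n : ℕ}
    (F : Fin (n + 1) → List α → M) (h : Fin (n + 1) → α) :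
    (List.ofFn fun k : Fin (n + 1) => F k ((List.ofFn h).drop (k.1 + 1))).prod =
      F 0 (List.ofFn fun j => h j.succ) *
        (List.ofFn fun k : Fin n =>
          F k.succ ((List.ofFn fun j => h j.succ).drop (k.1 + 1))).prod := by
  simp only [List.ofFn_succ, Fin.val_succ, Fin.val_zero, List.drop_succ_cons, List.drop_zero,
    List.prod_cons]

namespace CrossedModule

variable {G H : Type*} [Group G] [Group H]

def twistedProd (act : G → H → G) {n : ℕ} (g : Fin n → G) (h : Fin n → H) : G :=
  (List.ofFn fun k : Fin n => act (g k) ((List.ofFn h).drop (k.1 + 1)).prod).prod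

variable (act : G → H → G)

@[simp]
theorem twistedProd_zero (g : Fin 0 → G) (h : Fin 0 → H) : twistedProd act g h = 1 := rfl

theorem twistedProd_succ {n : ℕ} (g : Fin (n + 1) → G) (h : Fin (n + 1) → H) :
    twistedProd act g h =
      act (g 0) (List.ofFn fun j => h j.succ).prod *
        twistedProd act (fun j => g j.succ) fun j => h j.succ :=
  List.prod_ofFn_drop_succ (fun k l => act (g k) l.prod) h

variable (i : G →* H)

theorem prod_ofFn_mul_map (hequiv : ∀ (g : G) (h : H), i (act g h) = h⁻¹ * i g * h) :
    ∀ {n : ℕ} (g : Fin n → G) (h : Fin n → H),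
      (List.ofFn fun k => h k * i (g k)).prod = (List.ofFn h).prod * i (twistedProd act g h)
  | 0, _, _ => by simp
  | n + 1, g, h => by
    rw [twistedProd_succ, List.ofFn_succ, List.ofFn_succ, List.prod_cons, List.prod_cons,
      prod_ofFn_mul_map hequiv (fun j => g j.succ) (fun j => h j.succ), map_mul, hequiv]
    simp only [mul_assoc, mul_inv_cancel_left]

theorem act_mul_eq_mul_act (hact_mul : ∀ (g : G) (h₀ h₁ : H), act (act g h₀) h₁ = act g (h₀ * h₁))
    (hpeiffer : ∀ g₁ g₂ : G, act g₁ (i g₂) = g₂⁻¹ * g₁ * g₂) (g a : G) (h : H) :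
    act g h * a = a * act g (h * i a) := by
  rw [← hact_mul, hpeiffer, mul_assoc, mul_inv_cancel_left]

theorem twistedProd_mul
    (hact_mul : ∀ (g : G) (h₀ h₁ : H), act (act g h₀) h₁ = act g (h₀ * h₁))
    (hact_gmul : ∀ (g₀ g₁ : G) (h : H), act (g₀ * g₁) h = act g₀ h * act g₁ h)
    (hequiv : ∀ (g : G) (h : H), i (act g h) = h⁻¹ * i g * h)
    (hpeiffer : ∀ g₁ g₂ : G, act g₁ (i g₂) = g₂⁻¹ * g₁ * g₂) :
    ∀ {n : ℕ} (g g' : Fin n → G) (h : Fin n → H),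
      twistedProd act (g * g') h =
        twistedProd act g h * twistedProd act g' fun j => h j * i (g j)
  | 0, _, _, _ => by simp
  | n + 1, g, g', h => by
    have htail_mul :
        (fun j : Fin n => (g * g') j.succ) = (fun j => g j.succ) * fun j => g' j.succ := rfl
    rw [twistedProd_succ, twistedProd_succ, twistedProd_succ act g', htail_mul,
      prod_ofFn_mul_map act i hequiv, Pi.mul_apply, hact_gmul,
      twistedProd_mul hact_mul hact_gmul hequiv hpeiffer (fun j => g j.succ) fun j => g' j.succ,
      mul_assoc, mul_assoc, ← mul_assoc (act (g' 0) _),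
      act_mul_eq_mul_act act i hact_mul hpeiffer (g' 0), mul_assoc]

end CrossedModule

theorem stmt9_general {G : Type*} {H : Type*} [Group G] [Group H] (i : G →* H) (act : G → H → G)
    (hact_mul : ∀ (g : G) (h₀ h₁ : H), act (act g h₀) h₁ = act g (h₀ * h₁))
    (hact_gmul : ∀ (g₀ g₁ : G) (h : H), act (g₀ * g₁) h = act g₀ h * act g₁ h)
    (hequiv : ∀ (g : G) (h : H), i (act g h) = h⁻¹ * i g * h)
    (hpeiffer : ∀ g₁ g₂ : G, act g₁ (i g₂) = g₂⁻¹ * g₁ * g₂) :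
    ∀ (n : ℕ) (g g' : Fin (n + 1) → G) (h : Fin (n + 1) → H),
      (List.ofFn fun k : Fin (n + 1) =>
          act (g k * g' k) (((List.ofFn h).drop (k.1 + 1)).prod)).prod =
        (List.ofFn fun k : Fin (n + 1) =>
            act (g k) (((List.ofFn h).drop (k.1 + 1)).prod)).prod *
          (List.ofFn fun k : Fin (n + 1) =>
            act (g' k)
              (((List.ofFn fun j : Fin (n + 1) => h j * i (g j)).drop (k.1 + 1)).prod)).prod :=
  fun _ => CrossedModule.twistedProd_mul act i hact_mul hact_gmul hequiv hpeiffer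

/-- in a crossed module `i : G → H`, for `q = n+1 ≥ 1` elements, the identity
`∏ₖ (gₖ·g'ₖ)^{h_{k+1}⋯h_q} = (∏ₖ gₖ^{h_{k+1}⋯h_q}) · (∏ₖ (g'ₖ)^{h_{k+1}i(g_{k+1})⋯h_q i(g_q)})`
holds, all products being ordered. -/
theorem stmt9 {G : Type*} {H : Type*} [Group G] [Group H] (i : G →* H) (act : G → H → G)
    (hact_one : ∀ g : G, act g 1 = g)
    (hact_mul : ∀ (g : G) (h₀ h₁ : H), act (act g h₀) h₁ = act g (h₀ * h₁))
    (hact_gmul : ∀ (g₀ g₁ : G) (h : H), act (g₀ * g₁) h = act g₀ h * act g₁ h)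
    (hequiv : ∀ (g : G) (h : H), i (act g h) = h⁻¹ * i g * h)
    (hpeiffer : ∀ g₁ g₂ : G, act g₁ (i g₂) = g₂⁻¹ * g₁ * g₂) :
    ∀ (n : ℕ) (g g' : Fin (n + 1) → G) (h : Fin (n + 1) → H),
      (List.ofFn fun k : Fin (n + 1) =>
          act (g k * g' k) (((List.ofFn h).drop (k.1 + 1)).prod)).prod =
        (List.ofFn fun k : Fin (n + 1) =>
            act (g k) (((List.ofFn h).drop (k.1 + 1)).prod)).prod *
          (List.ofFn fun k : Fin (n + 1) =>
            act (g' k)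
              (((List.ofFn fun j : Fin (n + 1) => h j * i (g j)).drop (k.1 + 1)).prod)).prod :=
  stmt9_general i act hact_mul hact_gmul hequiv hpeiffer
end

section
/- Let (i : G → H) be a crossed module of groups with a 2-representation (ρ₀¹, ρ₀⁰, ρ₁) on a linear map φ : W → V of real vector spaces, and let ω₀ : H × H → V, ω₁ : G × G → W, α : H × G → W, ϕ : G → V be arbitrary maps. Define ε : G × W → H × V by ε(g,w) := (i(g), φ(w) + ϕ(g)). Then ε is multiplicative for the twisted products, i.e. ε((g₁,w₁)∗(g₂,w₂)) = ε(g₁,w₁)∗ε(g₂,w₂) for all g₁,g₂ ∈ G, w₁,w₂ ∈ W, if and only if for all g₁,g₂ ∈ G: φ(ω₁(g₁,g₂)) − ω₀(i(g₁), i(g₂)) = ρ₀⁰(i(g₁))(ϕ(g₂)) − ϕ(g₁g₂) + ϕ(g₁). -/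
/-! The `H`-components agree because `i` is a homomorphism. In the `V`-components the `w`-terms
cancel identically, since `φ` is additive and intertwines `ρ₀¹` with `ρ₀⁰`; what is left is the
cocycle relation, moved across the equation. -/

/-- The `V`-component of `ε(x ∗ y) = ε(x) ∗ ε(y)` for fixed group elements. -/
theorem map_twisted_add_eq_iff {W V Fφ Fρ : Type*} [AddCommGroup W] [AddCommGroup V]
    [FunLike Fφ W V] [AddMonoidHomClass Fφ W V] [FunLike Fρ V V] [AddMonoidHomClass Fρ V V]
    (φ : Fφ) (ρW : W → W) (ρV : Fρ) (hφρ : ∀ w, φ (ρW w) = ρV (φ w))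
    (w₁ w₂ ω₁ : W) (ω₀ ϕ₁ ϕ₂ ϕ₁₂ : V) :
    φ (w₁ + ρW w₂ + ω₁) + ϕ₁₂ = (φ w₁ + ϕ₁) + ρV (φ w₂ + ϕ₂) + ω₀ ↔
      φ ω₁ - ω₀ = ρV ϕ₂ - ϕ₁₂ + ϕ₁ := by
  rw [map_add, map_add, map_add, hφρ, ← sub_eq_zero, ← sub_eq_zero (a := φ ω₁ - ω₀)]
  convert Iff.rfl using 2
  abel

theorem stmt10_general {G : Type*} {H : Type*} [Group G] [Group H] (i : G →* H)
    {W : Type*} {V : Type*} [AddCommGroup W] [Module ℝ W] [AddCommGroup V] [Module ℝ V]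
    (φ : W →ₗ[ℝ] V) (ρW : H → W ≃ₗ[ℝ] W) (ρV : H → V ≃ₗ[ℝ] V)
    (hφρ : ∀ (h : H) (w : W), φ (ρW h w) = ρV h (φ w))
    (ω₀ : H → H → V) (ω₁ : G → G → W) (ϕ : G → V) :
    (∀ (g₁ g₂ : G) (w₁ w₂ : W),
      (((i (g₁ * g₂) : H), φ (w₁ + ρW (i g₁) w₂ + ω₁ g₁ g₂) + ϕ (g₁ * g₂)) : H × V) =
        ((i g₁ * i g₂ : H),
          (φ w₁ + ϕ g₁) + ρV (i g₁) (φ w₂ + ϕ g₂) + ω₀ (i g₁) (i g₂))) ↔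
    (∀ g₁ g₂ : G,
      φ (ω₁ g₁ g₂) - ω₀ (i g₁) (i g₂) = ρV (i g₁) (ϕ g₂) - ϕ (g₁ * g₂) + ϕ g₁) := by
  simp only [Prod.mk.injEq, map_mul, true_and]
  refine forall₂_congr fun g₁ g₂ => ?_
  simp only [map_twisted_add_eq_iff φ (ρW (i g₁)) (ρV (i g₁)) (hφρ (i g₁)), forall_const]

/-- the map `ε(g,w) = (i g, φ w + ϕ g)` is multiplicative for the twisted
products on `G × W` and `H × V` iff the cocycle relation
`φ(ω₁(g₁,g₂)) − ω₀(i g₁, i g₂) = ρ₀⁰(i g₁)(ϕ g₂) − ϕ(g₁g₂) + ϕ(g₁)` holds. -/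
theorem stmt10 {G : Type*} {H : Type*} [Group G] [Group H] (i : G →* H) (act : G → H → G)
    (hact_one : ∀ g : G, act g 1 = g)
    (hact_mul : ∀ (g : G) (h₀ h₁ : H), act (act g h₀) h₁ = act g (h₀ * h₁))
    (hact_gmul : ∀ (g₀ g₁ : G) (h : H), act (g₀ * g₁) h = act g₀ h * act g₁ h)
    (hequiv : ∀ (g : G) (h : H), i (act g h) = h⁻¹ * i g * h)
    (hpeiffer : ∀ g₁ g₂ : G, act g₁ (i g₂) = g₂⁻¹ * g₁ * g₂)
    {W : Type*} {V : Type*} [AddCommGroup W] [Module ℝ W] [AddCommGroup V] [Module ℝ V]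
    (φ : W →ₗ[ℝ] V) (ρW : H → W ≃ₗ[ℝ] W) (ρV : H → V ≃ₗ[ℝ] V) (ρ₁ : G → V →ₗ[ℝ] W)
    (hρW_mul : ∀ (h₀ h₁ : H) (w : W), ρW (h₀ * h₁) w = ρW h₀ (ρW h₁ w))
    (hρV_mul : ∀ (h₀ h₁ : H) (v : V), ρV (h₀ * h₁) v = ρV h₀ (ρV h₁ v))
    (hφρ : ∀ (h : H) (w : W), φ (ρW h w) = ρV h (φ w))
    (hρ₁_mul : ∀ (g₀ g₁ : G) (v : V),
      ρ₁ (g₀ * g₁) v = ρ₁ g₀ v + ρ₁ g₁ v + ρ₁ g₀ (φ (ρ₁ g₁ v)))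
    (hρV_i : ∀ (g : G) (v : V), ρV (i g) v = v + φ (ρ₁ g v))
    (hρW_i : ∀ (g : G) (w : W), ρW (i g) w = w + ρ₁ g (φ w))
    (hρ₁_act : ∀ (g : G) (h : H) (v : V), ρ₁ (act g h) v = (ρW h).symm (ρ₁ g (ρV h v)))
    (ω₀ : H → H → V) (ω₁ : G → G → W) (α : H → G → W) (ϕ : G → V) :
    (∀ (g₁ g₂ : G) (w₁ w₂ : W),
      (((i (g₁ * g₂) : H), φ (w₁ + ρW (i g₁) w₂ + ω₁ g₁ g₂) + ϕ (g₁ * g₂)) : H × V) =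
        ((i g₁ * i g₂ : H),
          (φ w₁ + ϕ g₁) + ρV (i g₁) (φ w₂ + ϕ g₂) + ω₀ (i g₁) (i g₂))) ↔
    (∀ g₁ g₂ : G,
      φ (ω₁ g₁ g₂) - ω₀ (i g₁) (i g₂) = ρV (i g₁) (ϕ g₂) - ϕ (g₁ * g₂) + ϕ g₁) :=
  stmt10_general i φ ρW ρV hφρ ω₀ ω₁ ϕ
end

section
/- Let (i : G → H) be a crossed module of groups with a 2-representation (ρ₀¹, ρ₀⁰, ρ₁) on a linear map φ : W → V of real vector spaces, and let ω₀ : H × H → V, α : H × G → W be arbitrary maps. Define, for (g,w) ∈ G × W and (h,v) ∈ H × V, the operation (g,w)^{(h,v)} := (g^h, ρ₀¹(h)⁻¹(w + ρ₁(g)(v)) + α(h,g)). Then the compatibility (g,w)^{(h₁,v₁)∗(h₂,v₂)} = ((g,w)^{(h₁,v₁)})^{(h₂,v₂)} holds for all g ∈ G, w ∈ W, h₁,h₂ ∈ H, v₁,v₂ ∈ V (where (h₁,v₁)∗(h₂,v₂) := (h₁h₂, v₁ + ρ₀⁰(h₁)(v₂) + ω₀(h₁,h₂))) if and only if for all h₁,h₂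 ∈ H and g ∈ G: ρ₀¹(h₁h₂)⁻¹(ρ₁(g)(ω₀(h₁,h₂))) = ρ₀¹(h₂)⁻¹(α(h₁,g)) − α(h₁h₂, g) + α(h₂, g^{h₁}). -/
/-!
Both sides of the compatibility identity are affine in `(w, v₁, v₂)` with the same linear part:
once `ρ₀¹(h₁h₂)⁻¹ = ρ₀¹(h₂)⁻¹ ∘ ρ₀¹(h₁)⁻¹` and `ρ₁(g^{h₁}) = ρ₀¹(h₁)⁻¹ ∘ ρ₁(g) ∘ ρ₀⁰(h₁)` are
used, the terms in `w`, `v₁`, `v₂` cancel and what remains is exactly the cocycle condition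
relating `ω₀` and `α`. The `G`-components agree because the action is a right action.
-/

section

variable {R M N : Type*} [Ring R] [AddCommGroup M] [Module R M] [AddCommGroup N] [Module R N]

theorem LinearEquiv.symm_apply_of_apply_eq_comp {e e₁ e₂ : M ≃ₗ[R] M}
    (he : ∀ x, e x = e₁ (e₂ x)) (x : M) : e.symm x = e₂.symm (e₁.symm x) := by
  rw [LinearEquiv.symm_apply_eq, he, LinearEquiv.apply_symm_apply, LinearEquiv.apply_symm_apply]

theorem affine_compat_eq_iff {e e₁ e₂ : M ≃ₗ[R] M} (he : ∀ x, e x = e₁ (e₂ x))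
    (f : N →ₗ[R] M) (w a a₁ a₂ : M) (v₁ u c : N) :
    e.symm (w + f (v₁ + u + c)) + a = e₂.symm ((e₁.symm (w + f v₁) + a₁) + e₁.symm (f u)) + a₂ ↔
      e.symm (f c) = e₂.symm a₁ - a + a₂ := by
  simp only [LinearEquiv.symm_apply_of_apply_eq_comp he, map_add]
  constructor <;> intro h <;> linear_combination (norm := abel) h

end

theorem stmt11_general {G : Type*} {H : Type*} [Group H] (act : G → H → G)
    (hact_mul : ∀ (g : G) (h₀ h₁ : H), act (act g h₀) h₁ = act g (h₀ * h₁))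
    {W : Type*} {V : Type*} [AddCommGroup W] [Module ℝ W] [AddCommGroup V] [Module ℝ V]
    (ρW : H → W ≃ₗ[ℝ] W) (ρV : H → V ≃ₗ[ℝ] V) (ρ₁ : G → V →ₗ[ℝ] W)
    (hρW_mul : ∀ (h₀ h₁ : H) (w : W), ρW (h₀ * h₁) w = ρW h₀ (ρW h₁ w))
    (hρ₁_act : ∀ (g : G) (h : H) (v : V), ρ₁ (act g h) v = (ρW h).symm (ρ₁ g (ρV h v)))
    (ω₀ : H → H → V) (α : H → G → W) :
    (∀ (g : G) (w : W) (h₁ h₂ : H) (v₁ v₂ : V),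
      ((act g (h₁ * h₂),
          (ρW (h₁ * h₂)).symm (w + ρ₁ g (v₁ + ρV h₁ v₂ + ω₀ h₁ h₂)) + α (h₁ * h₂) g) :
        G × W) =
      ((act (act g h₁) h₂,
          (ρW h₂).symm (((ρW h₁).symm (w + ρ₁ g v₁) + α h₁ g) + ρ₁ (act g h₁) v₂) +
            α h₂ (act g h₁)) : G × W)) ↔
    (∀ (h₁ h₂ : H) (g : G),
      (ρW (h₁ * h₂)).symm (ρ₁ g (ω₀ h₁ h₂)) =
        (ρW h₂).symm (α h₁ g) - α (h₁ * h₂) g + α h₂ (act g h₁)) := by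
  simp only [Prod.ext_iff, hact_mul, true_and, hρ₁_act,
    affine_compat_eq_iff (hρW_mul _ _)]
  exact ⟨fun h h₁ h₂ g => h g 0 h₁ h₂ 0 0, fun h g _ h₁ h₂ _ _ => h h₁ h₂ g⟩

/-- the formula `(g,w)^{(h,v)} = (g^h, ρ₀¹(h)⁻¹(w + ρ₁(g)v) + α(h,g))` is
compatible with the twisted product on `H × V` iff
`ρ₀¹(h₁h₂)⁻¹(ρ₁(g)(ω₀(h₁,h₂))) = ρ₀¹(h₂)⁻¹(α(h₁,g)) − α(h₁h₂,g) + α(h₂,g^{h₁})`. -/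
theorem stmt11 {G : Type*} {H : Type*} [Group G] [Group H] (i : G →* H) (act : G → H → G)
    (hact_one : ∀ g : G, act g 1 = g)
    (hact_mul : ∀ (g : G) (h₀ h₁ : H), act (act g h₀) h₁ = act g (h₀ * h₁))
    (hact_gmul : ∀ (g₀ g₁ : G) (h : H), act (g₀ * g₁) h = act g₀ h * act g₁ h)
    (hequiv : ∀ (g : G) (h : H), i (act g h) = h⁻¹ * i g * h)
    (hpeiffer : ∀ g₁ g₂ : G, act g₁ (i g₂) = g₂⁻¹ * g₁ * g₂)
    {W : Type*} {V : Type*} [AddCommGroup W] [Module ℝ W] [AddCommGroup V] [Module ℝ V]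
    (φ : W →ₗ[ℝ] V) (ρW : H → W ≃ₗ[ℝ] W) (ρV : H → V ≃ₗ[ℝ] V) (ρ₁ : G → V →ₗ[ℝ] W)
    (hρW_mul : ∀ (h₀ h₁ : H) (w : W), ρW (h₀ * h₁) w = ρW h₀ (ρW h₁ w))
    (hρV_mul : ∀ (h₀ h₁ : H) (v : V), ρV (h₀ * h₁) v = ρV h₀ (ρV h₁ v))
    (hφρ : ∀ (h : H) (w : W), φ (ρW h w) = ρV h (φ w))
    (hρ₁_mul : ∀ (g₀ g₁ : G) (v : V),
      ρ₁ (g₀ * g₁) v = ρ₁ g₀ v + ρ₁ g₁ v + ρ₁ g₀ (φ (ρ₁ g₁ v)))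
    (hρV_i : ∀ (g : G) (v : V), ρV (i g) v = v + φ (ρ₁ g v))
    (hρW_i : ∀ (g : G) (w : W), ρW (i g) w = w + ρ₁ g (φ w))
    (hρ₁_act : ∀ (g : G) (h : H) (v : V), ρ₁ (act g h) v = (ρW h).symm (ρ₁ g (ρV h v)))
    (ω₀ : H → H → V) (α : H → G → W) :
    (∀ (g : G) (w : W) (h₁ h₂ : H) (v₁ v₂ : V),
      ((act g (h₁ * h₂),
          (ρW (h₁ * h₂)).symm (w + ρ₁ g (v₁ + ρV h₁ v₂ + ω₀ h₁ h₂)) + α (h₁ * h₂) g) :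
        G × W) =
      ((act (act g h₁) h₂,
          (ρW h₂).symm (((ρW h₁).symm (w + ρ₁ g v₁) + α h₁ g) + ρ₁ (act g h₁) v₂) +
            α h₂ (act g h₁)) : G × W)) ↔
    (∀ (h₁ h₂ : H) (g : G),
      (ρW (h₁ * h₂)).symm (ρ₁ g (ω₀ h₁ h₂)) =
        (ρW h₂).symm (α h₁ g) - α (h₁ * h₂) g + α h₂ (act g h₁)) :=
  stmt11_general act hact_mul ρW ρV ρ₁ hρW_mul hρ₁_act ω₀ α
end

section
/- Let (i : G → H) be a crossed module of groups with a 2-representation (ρ₀¹, ρ₀⁰, ρ₁) on a linear map φ : W → V of real vector spaces, and let ω₁ : G × G → W, α : H × G → W be arbitrary maps. Define the action (g,w)^{(h,v)} := (g^h, ρ₀¹(h)⁻¹(w + ρ₁(g)(v)) + α(h,g)) and the twisted product (g₀,w₀)∗(g₁,w₁) := (g₀g₁, w₀ + ρ₀¹(i(g₀))(w₁) + ω₁(g₀,g₁)) on G × W. Then the identity ((g₁,w₁)∗(g₂,w₂))^{(h,v)} = (g₁,w₁)^{(h,v)} ∗ (g₂,w₂)^{(h,v)} holds for all g₁,g₂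 ∈ G, w₁,w₂ ∈ W, h ∈ H, v ∈ V if and only if for all g₁,g₂ ∈ G, h ∈ H: ρ₀¹(h)⁻¹(ω₁(g₁,g₂)) − ω₁(g₁^h, g₂^h) = ρ₀¹(i(g₁^h))(α(h,g₂)) − α(h, g₁g₂) + α(h, g₁). -/
/-!
The first components agree because `H` acts on `G` by automorphisms. For the second ones,
equivariance of `φ` and `ρ₁ (g ^ h) = ρ₀¹(h)⁻¹ ∘ ρ₁ g ∘ ρ₀⁰(h)` give
`ρ₀¹(i(g^h)) ∘ ρ₀¹(h)⁻¹ = ρ₀¹(h)⁻¹ ∘ ρ₀¹(i g)`, and the cocycle rule for `ρ₁` gives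
`ρ₁(g₁) v + ρ₀¹(i g₁)(ρ₁(g₂) v) = ρ₁(g₁g₂) v`. After these rewrites all terms in `w₁, w₂, v`
cancel, and what remains is exactly the stated condition on `ω₁` and `α`.
-/

section TwoRepresentation

variable {G H R W V : Type*} [Semiring R]
  [AddCommGroup W] [Module R W] [AddCommGroup V] [Module R V]
  {act : G → H → G} {φ : W →ₗ[R] V} {ρW : H → W ≃ₗ[R] W} {ρV : H → V ≃ₗ[R] V}
  {ρ₁ : G → V →ₗ[R] W}

theorem rho1_act_phi_symm (hφρ : ∀ (h : H) (w : W), φ (ρW h w) = ρV h (φ w))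
    (hρ₁_act : ∀ (g : G) (h : H) (v : V), ρ₁ (act g h) v = (ρW h).symm (ρ₁ g (ρV h v)))
    (g : G) (h : H) (w : W) :
    ρ₁ (act g h) (φ ((ρW h).symm w)) = (ρW h).symm (ρ₁ g (φ w)) := by
  rw [hρ₁_act, ← hφρ, LinearEquiv.apply_symm_apply]

theorem rhoW_i_act_symm [MulOneClass G] [MulOneClass H] {i : G →* H}
    (hφρ : ∀ (h : H) (w : W), φ (ρW h w) = ρV h (φ w))
    (hρW_i : ∀ (g : G) (w : W), ρW (i g) w = w + ρ₁ g (φ w))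
    (hρ₁_act : ∀ (g : G) (h : H) (v : V), ρ₁ (act g h) v = (ρW h).symm (ρ₁ g (ρV h v)))
    (g : G) (h : H) (w : W) :
    ρW (i (act g h)) ((ρW h).symm w) = (ρW h).symm (ρW (i g) w) := by
  rw [hρW_i, hρW_i, map_add, rho1_act_phi_symm hφρ hρ₁_act]

theorem rho1_add_rhoW_i_rho1 [MulOneClass G] [MulOneClass H] {i : G →* H}
    (hρW_i : ∀ (g : G) (w : W), ρW (i g) w = w + ρ₁ g (φ w))
    (hρ₁_mul : ∀ (g₀ g₁ : G) (v : V),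
      ρ₁ (g₀ * g₁) v = ρ₁ g₀ v + ρ₁ g₁ v + ρ₁ g₀ (φ (ρ₁ g₁ v)))
    (g₁ g₂ : G) (v : V) :
    ρ₁ g₁ v + ρW (i g₁) (ρ₁ g₂ v) = ρ₁ (g₁ * g₂) v := by
  rw [hρW_i, hρ₁_mul, add_assoc]

/-- The two sides are the second components of `((g₁,w₁) ∗ (g₂,w₂))^(h,v)` and
`(g₁,w₁)^(h,v) ∗ (g₂,w₂)^(h,v)`. -/
theorem twisted_snd_eq_iff [MulOneClass G] [MulOneClass H] {i : G →* H}
    (hφρ : ∀ (h : H) (w : W), φ (ρW h w) = ρV h (φ w))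
    (hρ₁_mul : ∀ (g₀ g₁ : G) (v : V),
      ρ₁ (g₀ * g₁) v = ρ₁ g₀ v + ρ₁ g₁ v + ρ₁ g₀ (φ (ρ₁ g₁ v)))
    (hρW_i : ∀ (g : G) (w : W), ρW (i g) w = w + ρ₁ g (φ w))
    (hρ₁_act : ∀ (g : G) (h : H) (v : V), ρ₁ (act g h) v = (ρW h).symm (ρ₁ g (ρV h v)))
    (ω₁ : G → G → W) (α : H → G → W) (g₁ g₂ : G) (w₁ w₂ : W) (h : H) (v : V) :
    (ρW h).symm ((w₁ + ρW (i g₁) w₂ + ω₁ g₁ g₂) + ρ₁ (g₁ * g₂) v) + α h (g₁ * g₂) =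
        ((ρW h).symm (w₁ + ρ₁ g₁ v) + α h g₁) +
          ρW (i (act g₁ h)) ((ρW h).symm (w₂ + ρ₁ g₂ v) + α h g₂) +
          ω₁ (act g₁ h) (act g₂ h) ↔
      (ρW h).symm (ω₁ g₁ g₂) - ω₁ (act g₁ h) (act g₂ h) =
        ρW (i (act g₁ h)) (α h g₂) - α h (g₁ * g₂) + α h g₁ := by
  have hv := congrArg (ρW h).symm (rho1_add_rhoW_i_rho1 hρW_i hρ₁_mul g₁ g₂ v)
  simp only [map_add, rhoW_i_act_symm hφρ hρW_i hρ₁_act] at hv ⊢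
  constructor
  · intro hsnd
    linear_combination (norm := abel) hsnd + hv
  · intro hcocycle
    linear_combination (norm := abel) hcocycle - hv

end TwoRepresentation

theorem stmt14_general {G : Type*} {H : Type*} [Group G] [Group H] (i : G →* H) (act : G → H → G)
    (hact_gmul : ∀ (g₀ g₁ : G) (h : H), act (g₀ * g₁) h = act g₀ h * act g₁ h)
    {W : Type*} {V : Type*} [AddCommGroup W] [Module ℝ W] [AddCommGroup V] [Module ℝ V]
    (φ : W →ₗ[ℝ] V) (ρW : H → W ≃ₗ[ℝ] W) (ρV : H → V ≃ₗ[ℝ] V) (ρ₁ : G → V →ₗ[ℝ] W)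
    (hφρ : ∀ (h : H) (w : W), φ (ρW h w) = ρV h (φ w))
    (hρ₁_mul : ∀ (g₀ g₁ : G) (v : V),
      ρ₁ (g₀ * g₁) v = ρ₁ g₀ v + ρ₁ g₁ v + ρ₁ g₀ (φ (ρ₁ g₁ v)))
    (hρW_i : ∀ (g : G) (w : W), ρW (i g) w = w + ρ₁ g (φ w))
    (hρ₁_act : ∀ (g : G) (h : H) (v : V), ρ₁ (act g h) v = (ρW h).symm (ρ₁ g (ρV h v)))
    (ω₁ : G → G → W) (α : H → G → W) :
    (∀ (g₁ g₂ : G) (w₁ w₂ : W) (h : H) (v : V),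
      ((act (g₁ * g₂) h,
          (ρW h).symm ((w₁ + ρW (i g₁) w₂ + ω₁ g₁ g₂) + ρ₁ (g₁ * g₂) v) +
            α h (g₁ * g₂)) : G × W) =
        ((act g₁ h * act g₂ h,
          ((ρW h).symm (w₁ + ρ₁ g₁ v) + α h g₁) +
            ρW (i (act g₁ h)) ((ρW h).symm (w₂ + ρ₁ g₂ v) + α h g₂) +
            ω₁ (act g₁ h) (act g₂ h)) : G × W)) ↔
    (∀ (g₁ g₂ : G) (h : H),
      (ρW h).symm (ω₁ g₁ g₂) - ω₁ (act g₁ h) (act g₂ h) =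
        ρW (i (act g₁ h)) (α h g₂) - α h (g₁ * g₂) + α h g₁) := by
  have hsnd := twisted_snd_eq_iff hφρ hρ₁_mul hρW_i hρ₁_act ω₁ α
  simp only [Prod.ext_iff, hact_gmul, true_and, hsnd]
  exact ⟨fun hall g₁ g₂ h => hall g₁ g₂ 0 0 h 0, fun hcocycle g₁ g₂ _ _ h _ => hcocycle g₁ g₂ h⟩

/-- the action `(g,w)^{(h,v)}` is by automorphisms of the twisted product on
`G × W` iff `ρ₀¹(h)⁻¹(ω₁(g₁,g₂)) − ω₁(g₁^h,g₂^h) = ρ₀¹(i(g₁^h))(α(h,g₂)) − α(h,g₁g₂) + α(h,g₁)`. -/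
theorem stmt14 {G : Type*} {H : Type*} [Group G] [Group H] (i : G →* H) (act : G → H → G)
    (hact_one : ∀ g : G, act g 1 = g)
    (hact_mul : ∀ (g : G) (h₀ h₁ : H), act (act g h₀) h₁ = act g (h₀ * h₁))
    (hact_gmul : ∀ (g₀ g₁ : G) (h : H), act (g₀ * g₁) h = act g₀ h * act g₁ h)
    (hequiv : ∀ (g : G) (h : H), i (act g h) = h⁻¹ * i g * h)
    (hpeiffer : ∀ g₁ g₂ : G, act g₁ (i g₂) = g₂⁻¹ * g₁ * g₂)
    {W : Type*} {V : Type*} [AddCommGroup W] [Module ℝ W] [AddCommGroup V] [Module ℝ V]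
    (φ : W →ₗ[ℝ] V) (ρW : H → W ≃ₗ[ℝ] W) (ρV : H → V ≃ₗ[ℝ] V) (ρ₁ : G → V →ₗ[ℝ] W)
    (hρW_mul : ∀ (h₀ h₁ : H) (w : W), ρW (h₀ * h₁) w = ρW h₀ (ρW h₁ w))
    (hρV_mul : ∀ (h₀ h₁ : H) (v : V), ρV (h₀ * h₁) v = ρV h₀ (ρV h₁ v))
    (hφρ : ∀ (h : H) (w : W), φ (ρW h w) = ρV h (φ w))
    (hρ₁_mul : ∀ (g₀ g₁ : G) (v : V),
      ρ₁ (g₀ * g₁) v = ρ₁ g₀ v + ρ₁ g₁ v + ρ₁ g₀ (φ (ρ₁ g₁ v)))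
    (hρV_i : ∀ (g : G) (v : V), ρV (i g) v = v + φ (ρ₁ g v))
    (hρW_i : ∀ (g : G) (w : W), ρW (i g) w = w + ρ₁ g (φ w))
    (hρ₁_act : ∀ (g : G) (h : H) (v : V), ρ₁ (act g h) v = (ρW h).symm (ρ₁ g (ρV h v)))
    (ω₁ : G → G → W) (α : H → G → W) :
    (∀ (g₁ g₂ : G) (w₁ w₂ : W) (h : H) (v : V),
      ((act (g₁ * g₂) h,
          (ρW h).symm ((w₁ + ρW (i g₁) w₂ + ω₁ g₁ g₂) + ρ₁ (g₁ * g₂) v) +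
            α h (g₁ * g₂)) : G × W) =
        ((act g₁ h * act g₂ h,
          ((ρW h).symm (w₁ + ρ₁ g₁ v) + α h g₁) +
            ρW (i (act g₁ h)) ((ρW h).symm (w₂ + ρ₁ g₂ v) + α h g₂) +
            ω₁ (act g₁ h) (act g₂ h)) : G × W)) ↔
    (∀ (g₁ g₂ : G) (h : H),
      (ρW h).symm (ω₁ g₁ g₂) - ω₁ (act g₁ h) (act g₂ h) =
        ρW (i (act g₁ h)) (α h g₂) - α h (g₁ * g₂) + α h g₁) :=
  stmt14_general i act hact_gmul φ ρW ρV ρ₁ hφρ hρ₁_mul hρW_i hρ₁_act ω₁ α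
end

section
/- Let (i : G → H) be a crossed module of groups with a 2-representation (ρ₀¹, ρ₀⁰, ρ₁) on a linear map φ : W → V of real vector spaces. Suppose λ₀ : H → V and λ₁ : G → W satisfy: λ₀(h₀h₁) = λ₀(h₀) + ρ₀⁰(h₀)(λ₀(h₁)) for all h₀,h₁ ∈ H; λ₁(g₀g₁) = λ₁(g₀) + ρ₀¹(i(g₀))(λ₁(g₁)) for all g₀,g₁ ∈ G; λ₀(h·i(g)) = λ₀(h) + φ(ρ₀¹(h)(λ₁(g))) for all g ∈ G, h ∈ H; and λ₁(g^h) = ρ₀¹(h)⁻¹(ρ₁(g)(λ₀(h))) + ρ₀¹(h)⁻¹(λ₁(g)) for all g ∈ G, h ∈ H. Define λ̄ : G × H → W × V by λ̄(g,h) := (ρ₀¹(h)(λ₁(g)), λ₀(h)). Then: (a) ρ₀¹(h)(λ₁(g₁g₀)) = ρ₀¹(h·i(g₁))(λ₁(g₀)) + ρ₀¹(h)(λ₁(g₁)) for all g₀,g₁ ∈ G, h ∈ H; (b) λ̄ is a crossed homomorphism with respect to ρ̄, i.e. λ̄((g₀,h₀)·(g₁,h₁)) = λ̄(g₀,h₀)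 + ρ̄(g₀,h₀)(λ̄(g₁,h₁)) for all g₀,g₁ ∈ G, h₀,h₁ ∈ H, where (g₀,h₀)·(g₁,h₁) := (g₀^{h₁}·g₁, h₀h₁) and ρ̄(g,h)(w,v) := (ρ₀¹(h·i(g))(w) + ρ₀¹(h)(ρ₁(g)(v)), ρ₀⁰(h)(v)). -/
/-!
Part (a) is the cocycle identity of `λ₁` transported by `ρ₀¹(h)`. In part (b) the
`V`-component is the cocycle identity of `λ₀`; the `W`-component expands by the cocycle identity
of `λ₁` and the formula for `λ₁(g^h)`, after which the equivariance `i(g^h) = h⁻¹ i(g) h` turns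
`ρ₀¹(h₀ h₁ i(g₀^{h₁}))` into `ρ₀¹(h₀ i(g₀) h₁)`.
-/

theorem map_cocycle_mul {G H R W : Type*} [Mul G] [Mul H] [Semiring R] [AddCommMonoid W]
    [Module R W] (i : G → H) (ρ : H → W ≃ₗ[R] W)
    (hρ_mul : ∀ (h₀ h₁ : H) (w : W), ρ (h₀ * h₁) w = ρ h₀ (ρ h₁ w))
    (c : G → W) (hc : ∀ g₀ g₁ : G, c (g₀ * g₁) = c g₀ + ρ (i g₀) (c g₁)) (g₀ g₁ : G) (h : H) :
    ρ h (c (g₁ * g₀)) = ρ (h * i g₁) (c g₀) + ρ h (c g₁) := by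
  rw [hc, map_add, hρ_mul, add_comm]

theorem map_mul_map_equivariant {G H R W : Type*} [Group H] [Semiring R] [AddCommMonoid W]
    [Module R W] (i : G → H) (act : G → H → G)
    (hequiv : ∀ (g : G) (h : H), i (act g h) = h⁻¹ * i g * h)
    (ρ : H → W ≃ₗ[R] W) (hρ_mul : ∀ (h₀ h₁ : H) (w : W), ρ (h₀ * h₁) w = ρ h₀ (ρ h₁ w))
    (g : G) (h₀ h₁ : H) (w : W) :
    ρ (h₀ * h₁) (ρ (i (act g h₁)) w) = ρ (h₀ * i g) (ρ h₁ w) := by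
  rw [← hρ_mul, ← hρ_mul, hequiv, show h₀ * h₁ * (h₁⁻¹ * i g * h₁) = h₀ * i g * h₁ by group]

theorem map_cocycle_act_mul {G H R W V : Type*} [Mul G] [Group H] [Semiring R]
    [AddCommMonoid W] [Module R W] [AddCommMonoid V] [Module R V]
    (i : G → H) (act : G → H → G) (hequiv : ∀ (g : G) (h : H), i (act g h) = h⁻¹ * i g * h)
    (ρW : H → W ≃ₗ[R] W) (ρ₁ : G → V →ₗ[R] W)
    (hρW_mul : ∀ (h₀ h₁ : H) (w : W), ρW (h₀ * h₁) w = ρW h₀ (ρW h₁ w))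
    (lam₀ : H → V) (lam₁ : G → W)
    (hlam₁ : ∀ g₀ g₁ : G, lam₁ (g₀ * g₁) = lam₁ g₀ + ρW (i g₀) (lam₁ g₁))
    (hlam₁act : ∀ (g : G) (h : H),
      lam₁ (act g h) = (ρW h).symm (ρ₁ g (lam₀ h)) + (ρW h).symm (lam₁ g))
    (g₀ g₁ : G) (h₀ h₁ : H) :
    ρW (h₀ * h₁) (lam₁ (act g₀ h₁ * g₁)) =
      ρW h₀ (lam₁ g₀) + (ρW (h₀ * i g₀) (ρW h₁ (lam₁ g₁)) + ρW h₀ (ρ₁ g₀ (lam₀ h₁))) := by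
  rw [hlam₁, map_add, map_mul_map_equivariant i act hequiv ρW hρW_mul, hlam₁act, map_add,
    hρW_mul, hρW_mul, LinearEquiv.apply_symm_apply, LinearEquiv.apply_symm_apply]
  abel

theorem stmt18_general {G : Type*} {H : Type*} [Group G] [Group H] (i : G →* H) (act : G → H → G)
    (hequiv : ∀ (g : G) (h : H), i (act g h) = h⁻¹ * i g * h)
    {W : Type*} {V : Type*} [AddCommGroup W] [Module ℝ W] [AddCommGroup V] [Module ℝ V]
    (ρW : H → W ≃ₗ[ℝ] W) (ρV : H → V ≃ₗ[ℝ] V) (ρ₁ : G → V →ₗ[ℝ] W)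
    (hρW_mul : ∀ (h₀ h₁ : H) (w : W), ρW (h₀ * h₁) w = ρW h₀ (ρW h₁ w))
    (lam₀ : H → V) (lam₁ : G → W)
    (hlam₀ : ∀ h₀ h₁ : H, lam₀ (h₀ * h₁) = lam₀ h₀ + ρV h₀ (lam₀ h₁))
    (hlam₁ : ∀ g₀ g₁ : G, lam₁ (g₀ * g₁) = lam₁ g₀ + ρW (i g₀) (lam₁ g₁))
    (hlam₁act : ∀ (g : G) (h : H),
      lam₁ (act g h) = (ρW h).symm (ρ₁ g (lam₀ h)) + (ρW h).symm (lam₁ g)) :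
    -- (a)
    (∀ (g₀ g₁ : G) (h : H),
      ρW h (lam₁ (g₁ * g₀)) = ρW (h * i g₁) (lam₁ g₀) + ρW h (lam₁ g₁)) ∧
    -- (b) λ̄ is a crossed homomorphism with respect to ρ̄
    (∀ (g₀ g₁ : G) (h₀ h₁ : H),
      ((ρW (h₀ * h₁) (lam₁ (act g₀ h₁ * g₁)), lam₀ (h₀ * h₁)) : W × V) =
        ((ρW h₀ (lam₁ g₀), lam₀ h₀) : W × V) +
          ((ρW (h₀ * i g₀) (ρW h₁ (lam₁ g₁)) + ρW h₀ (ρ₁ g₀ (lam₀ h₁)),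
            ρV h₀ (lam₀ h₁)) : W × V)) :=
  ⟨map_cocycle_mul i ρW hρW_mul lam₁ hlam₁, fun g₀ g₁ h₀ h₁ =>
    Prod.ext (map_cocycle_act_mul i act hequiv ρW ρ₁ hρW_mul lam₀ lam₁ hlam₁ hlam₁act g₀ g₁ h₀ h₁)
      (hlam₀ h₀ h₁)⟩

/-- if `λ₀, λ₁` are crossed homomorphisms compatible with the structure maps,
then `λ̄(g,h) = (ρ₀¹(h)(λ₁ g), λ₀ h)` is a crossed homomorphism with respect to the honest
representation `ρ̄` of the semidirect product. -/
theorem stmt18 {G : Type*} {H : Type*} [Group G] [Group H] (i : G →* H) (act : G → H → G)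
    (hact_one : ∀ g : G, act g 1 = g)
    (hact_mul : ∀ (g : G) (h₀ h₁ : H), act (act g h₀) h₁ = act g (h₀ * h₁))
    (hact_gmul : ∀ (g₀ g₁ : G) (h : H), act (g₀ * g₁) h = act g₀ h * act g₁ h)
    (hequiv : ∀ (g : G) (h : H), i (act g h) = h⁻¹ * i g * h)
    (hpeiffer : ∀ g₁ g₂ : G, act g₁ (i g₂) = g₂⁻¹ * g₁ * g₂)
    {W : Type*} {V : Type*} [AddCommGroup W] [Module ℝ W] [AddCommGroup V] [Module ℝ V]
    (φ : W →ₗ[ℝ] V) (ρW : H → W ≃ₗ[ℝ] W) (ρV : H → V ≃ₗ[ℝ] V) (ρ₁ : G → V →ₗ[ℝ] W)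
    (hρW_mul : ∀ (h₀ h₁ : H) (w : W), ρW (h₀ * h₁) w = ρW h₀ (ρW h₁ w))
    (hρV_mul : ∀ (h₀ h₁ : H) (v : V), ρV (h₀ * h₁) v = ρV h₀ (ρV h₁ v))
    (hφρ : ∀ (h : H) (w : W), φ (ρW h w) = ρV h (φ w))
    (hρ₁_mul : ∀ (g₀ g₁ : G) (v : V),
      ρ₁ (g₀ * g₁) v = ρ₁ g₀ v + ρ₁ g₁ v + ρ₁ g₀ (φ (ρ₁ g₁ v)))
    (hρV_i : ∀ (g : G) (v : V), ρV (i g) v = v + φ (ρ₁ g v))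
    (hρW_i : ∀ (g : G) (w : W), ρW (i g) w = w + ρ₁ g (φ w))
    (hρ₁_act : ∀ (g : G) (h : H) (v : V), ρ₁ (act g h) v = (ρW h).symm (ρ₁ g (ρV h v)))
    (lam₀ : H → V) (lam₁ : G → W)
    (hlam₀ : ∀ h₀ h₁ : H, lam₀ (h₀ * h₁) = lam₀ h₀ + ρV h₀ (lam₀ h₁))
    (hlam₁ : ∀ g₀ g₁ : G, lam₁ (g₀ * g₁) = lam₁ g₀ + ρW (i g₀) (lam₁ g₁))
    (hlam₀i : ∀ (g : G) (h : H), lam₀ (h * i g) = lam₀ h + φ (ρW h (lam₁ g)))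
    (hlam₁act : ∀ (g : G) (h : H),
      lam₁ (act g h) = (ρW h).symm (ρ₁ g (lam₀ h)) + (ρW h).symm (lam₁ g)) :
    -- (a)
    (∀ (g₀ g₁ : G) (h : H),
      ρW h (lam₁ (g₁ * g₀)) = ρW (h * i g₁) (lam₁ g₀) + ρW h (lam₁ g₁)) ∧
    -- (b) λ̄ is a crossed homomorphism with respect to ρ̄
    (∀ (g₀ g₁ : G) (h₀ h₁ : H),
      ((ρW (h₀ * h₁) (lam₁ (act g₀ h₁ * g₁)), lam₀ (h₀ * h₁)) : W × V) =
        ((ρW h₀ (lam₁ g₀), lam₀ h₀) : W × V) +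
          ((ρW (h₀ * i g₀) (ρW h₁ (lam₁ g₁)) + ρW h₀ (ρ₁ g₀ (lam₀ h₁)),
            ρV h₀ (lam₀ h₁)) : W × V)) :=
  stmt18_general i act hequiv ρW ρV ρ₁ hρW_mul lam₀ lam₁ hlam₀ hlam₁ hlam₁act
end

section
/- Let (i : G → H) be a crossed module of groups, and let ω₀ : H × H → ℝ and ϕ : G → ℝ satisfy: (1) ω₀(h₁,h₂) − ω₀(h₀h₁,h₂) + ω₀(h₀,h₁h₂) − ω₀(h₀,h₁) = 0 for all h₀,h₁,h₂ ∈ H; (2) −ω₀(i(g₁), i(g₂)) = ϕ(g₂) − ϕ(g₁g₂) + ϕ(g₁) for all g₁,g₂ ∈ G; (3) ϕ(g^h) − ϕ(g) = ω₀(i(g), h) + ω₀(h⁻¹, i(g)·h) − ω₀(h⁻¹, h) for all g ∈ G, h ∈ H. Define f : G × H → ℝ by f(g,h) := −ω₀(h, i(g)) − ϕ(g). Then: (a) f(g₂g₁, h) = f(g₂, h) + f(g₁, h·i(g₂)) for all g₁,g₂ ∈ G, h ∈ H; (b) f(g₁,h₁) − f(g₀^{h₁}·g₁, h₀h₁) +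 f(g₀,h₀) = ω₀(h₀·i(g₀), h₁·i(g₁)) − ω₀(h₀,h₁) for all g₀,g₁ ∈ G, h₀,h₁ ∈ H. -/
/-!
(a) is the cocycle identity for `ω₀` at `(h, i g₂, i g₁)` combined with (2).
For (b), the normalization `ω₀ 1 1 = 0`, forced by (3) at `g = h = 1`, and the cocycle identity
at `(h, h⁻¹, ·)` simplify (3) to `ϕ (g ^ h) - ϕ g = ω₀ (i g) h - ω₀ h (i (g ^ h))`. Expanding
`ϕ (g₀ ^ h₁ * g₁)` with (2) and this form of (3) leaves an identity between values of `ω₀` alone,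
which compares the two bracketings of `h₀ i g₀ · h₁ i g₁ = h₀ h₁ · i (g₀ ^ h₁) i g₁`.
-/

/-- The curried form of `groupCohomology.IsCocycle₂` for the trivial action of `H` on `A`. -/
def IsTwoCocycle {H A : Type*} [Group H] [AddCommGroup A] (ω : H → H → A) : Prop :=
  ∀ h₀ h₁ h₂ : H, ω h₁ h₂ - ω (h₀ * h₁) h₂ + ω h₀ (h₁ * h₂) - ω h₀ h₁ = 0

namespace IsTwoCocycle

variable {H A : Type*} [Group H] [AddCommGroup A] {ω : H → H → A}

theorem map_one_left (hω : IsTwoCocycle ω) (h : H) : ω 1 h = ω 1 1 := by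
  have := hω 1 1 h
  simp only [mul_one, one_mul] at this
  linear_combination (norm := abel) this

theorem map_one_right (hω : IsTwoCocycle ω) (h : H) : ω h 1 = ω 1 1 := by
  have := hω h 1 1
  simp only [mul_one] at this
  linear_combination (norm := abel) -this

theorem map_inv_mul_sub_map_inv (hω : IsTwoCocycle ω) (a h : H) :
    ω h⁻¹ (a * h) - ω h⁻¹ h = ω 1 1 - ω h (h⁻¹ * a * h) := by
  have hah := hω h h⁻¹ (a * h)
  have hh := hω h h⁻¹ h
  simp only [mul_inv_cancel, inv_mul_cancel] at hah hh
  rw [map_one_left hω, ← mul_assoc] at hah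
  rw [map_one_left hω, map_one_right hω h] at hh
  linear_combination (norm := abel) hah - hh

theorem map_mul_mul_of_mul_eq (hω : IsTwoCocycle ω) {h₀ h₁ a a' : H} (b : H)
    (hc : a * h₁ = h₁ * a') :
    ω (h₀ * a) (h₁ * b) - ω h₀ h₁ =
      ω (h₀ * h₁) (a' * b) + ω a' b - ω h₁ b + ω a h₁ - ω h₀ a - ω h₁ a' := by
  have c₁ := hω h₀ a (h₁ * b)
  have c₂ := hω a h₁ b
  have c₃ := hω h₀ h₁ (a' * b)
  have c₄ := hω h₁ a' b
  rw [← mul_assoc a, hc, mul_assoc] at c₁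
  rw [hc] at c₂
  linear_combination (norm := abel) -c₁ + c₂ + c₃ - c₄

end IsTwoCocycle

section CrossedModule

variable {G H A : Type*} [Group G] [Group H] [AddCommGroup A]
  {i : G →* H} {act : G → H → G} {ω : H → H → A} {ϕ : G → A}

def crossedCochain (i : G →* H) (ω : H → H → A) (ϕ : G → A) (g : G) (h : H) : A :=
  -ω h (i g) - ϕ g

theorem crossedCochain_mul (hω : IsTwoCocycle ω)
    (hϕ : ∀ g₁ g₂ : G, -ω (i g₁) (i g₂) = ϕ g₂ - ϕ (g₁ * g₂) + ϕ g₁) (g₁ g₂ : G) (h : H) :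
    crossedCochain i ω ϕ (g₂ * g₁) h =
      crossedCochain i ω ϕ g₂ h + crossedCochain i ω ϕ g₁ (h * i g₂) := by
  have hcoc := hω h (i g₂) (i g₁)
  unfold crossedCochain
  rw [map_mul]
  linear_combination (norm := abel) -hcoc - hϕ g₂ g₁

theorem map_act_sub_map (hω : IsTwoCocycle ω) (hact_one : ∀ g : G, act g 1 = g)
    (hequiv : ∀ (g : G) (h : H), i (act g h) = h⁻¹ * i g * h)
    (hϕact : ∀ (g : G) (h : H), ϕ (act g h) - ϕ g = ω (i g) h + ω h⁻¹ (i g * h) - ω h⁻¹ h)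
    (g : G) (h : H) :
    ϕ (act g h) - ϕ g = ω (i g) h - ω h (i (act g h)) := by
  have hnormalized : ω 1 1 = 0 := by simpa [hact_one] using (hϕact 1 1).symm
  rw [hϕact, add_sub_assoc, hω.map_inv_mul_sub_map_inv, hnormalized, hequiv]
  abel

theorem crossedCochain_act_mul (hω : IsTwoCocycle ω) (hact_one : ∀ g : G, act g 1 = g)
    (hequiv : ∀ (g : G) (h : H), i (act g h) = h⁻¹ * i g * h)
    (hϕ : ∀ g₁ g₂ : G, -ω (i g₁) (i g₂) = ϕ g₂ - ϕ (g₁ * g₂) + ϕ g₁)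
    (hϕact : ∀ (g : G) (h : H), ϕ (act g h) - ϕ g = ω (i g) h + ω h⁻¹ (i g * h) - ω h⁻¹ h)
    (g₀ g₁ : G) (h₀ h₁ : H) :
    crossedCochain i ω ϕ g₁ h₁ - crossedCochain i ω ϕ (act g₀ h₁ * g₁) (h₀ * h₁) +
        crossedCochain i ω ϕ g₀ h₀ =
      ω (h₀ * i g₀) (h₁ * i g₁) - ω h₀ h₁ := by
  have hconj : i g₀ * h₁ = h₁ * i (act g₀ h₁) := by simp [hequiv, mul_assoc]
  unfold crossedCochain
  rw [hω.map_mul_mul_of_mul_eq (i g₁) hconj, map_mul]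
  linear_combination (norm := abel)
    hϕ (act g₀ h₁) g₁ + map_act_sub_map hω hact_one hequiv hϕact g₀ h₁

end CrossedModule

theorem stmt19_general {G : Type*} {H : Type*} [Group G] [Group H] (i : G →* H) (act : G → H → G)
    (hact_one : ∀ g : G, act g 1 = g)
    (hequiv : ∀ (g : G) (h : H), i (act g h) = h⁻¹ * i g * h)
    (ω₀ : H → H → ℝ) (ϕ : G → ℝ)
    (hω₀ : ∀ h₀ h₁ h₂ : H,
      ω₀ h₁ h₂ - ω₀ (h₀ * h₁) h₂ + ω₀ h₀ (h₁ * h₂) - ω₀ h₀ h₁ = 0)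
    (hϕ : ∀ g₁ g₂ : G, -ω₀ (i g₁) (i g₂) = ϕ g₂ - ϕ (g₁ * g₂) + ϕ g₁)
    (hϕact : ∀ (g : G) (h : H),
      ϕ (act g h) - ϕ g = ω₀ (i g) h + ω₀ h⁻¹ (i g * h) - ω₀ h⁻¹ h) :
    -- (a)
    (∀ (g₁ g₂ : G) (h : H),
      -ω₀ h (i (g₂ * g₁)) - ϕ (g₂ * g₁) =
        (-ω₀ h (i g₂) - ϕ g₂) + (-ω₀ (h * i g₂) (i g₁) - ϕ g₁)) ∧
    -- (b)
    (∀ (g₀ g₁ : G) (h₀ h₁ : H),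
      (-ω₀ h₁ (i g₁) - ϕ g₁) -
          (-ω₀ (h₀ * h₁) (i (act g₀ h₁ * g₁)) - ϕ (act g₀ h₁ * g₁)) +
        (-ω₀ h₀ (i g₀) - ϕ g₀) =
      ω₀ (h₀ * i g₀) (h₁ * i g₁) - ω₀ h₀ h₁) :=
  ⟨crossedCochain_mul hω₀ hϕ, crossedCochain_act_mul hω₀ hact_one hequiv hϕ hϕact⟩

/-- given a crossed module and `(ω₀, ϕ)` satisfying the three listed
equations, the map `f(g,h) := −ω₀(h, i g) − ϕ(g)` satisfies `∂f = 0` and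
`∂ω₀ + δf = 0`. -/
theorem stmt19 {G : Type*} {H : Type*} [Group G] [Group H] (i : G →* H) (act : G → H → G)
    (hact_one : ∀ g : G, act g 1 = g)
    (hact_mul : ∀ (g : G) (h₀ h₁ : H), act (act g h₀) h₁ = act g (h₀ * h₁))
    (hact_gmul : ∀ (g₀ g₁ : G) (h : H), act (g₀ * g₁) h = act g₀ h * act g₁ h)
    (hequiv : ∀ (g : G) (h : H), i (act g h) = h⁻¹ * i g * h)
    (hpeiffer : ∀ g₁ g₂ : G, act g₁ (i g₂) = g₂⁻¹ * g₁ * g₂)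
    (ω₀ : H → H → ℝ) (ϕ : G → ℝ)
    (hω₀ : ∀ h₀ h₁ h₂ : H,
      ω₀ h₁ h₂ - ω₀ (h₀ * h₁) h₂ + ω₀ h₀ (h₁ * h₂) - ω₀ h₀ h₁ = 0)
    (hϕ : ∀ g₁ g₂ : G, -ω₀ (i g₁) (i g₂) = ϕ g₂ - ϕ (g₁ * g₂) + ϕ g₁)
    (hϕact : ∀ (g : G) (h : H),
      ϕ (act g h) - ϕ g = ω₀ (i g) h + ω₀ h⁻¹ (i g * h) - ω₀ h⁻¹ h) :
    -- (a)
    (∀ (g₁ g₂ : G) (h : H),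
      -ω₀ h (i (g₂ * g₁)) - ϕ (g₂ * g₁) =
        (-ω₀ h (i g₂) - ϕ g₂) + (-ω₀ (h * i g₂) (i g₁) - ϕ g₁)) ∧
    -- (b)
    (∀ (g₀ g₁ : G) (h₀ h₁ : H),
      (-ω₀ h₁ (i g₁) - ϕ g₁) -
          (-ω₀ (h₀ * h₁) (i (act g₀ h₁ * g₁)) - ϕ (act g₀ h₁ * g₁)) +
        (-ω₀ h₀ (i g₀) - ϕ g₀) =
      ω₀ (h₀ * i g₀) (h₁ * i g₁) - ω₀ h₀ h₁) :=
  stmt19_general i act hact_one hequiv ω₀ ϕ hω₀ hϕ hϕact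
end
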